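/- Let σ : ℝⁿ → (0,∞) be a measurable weight function and suppose there are constants C > 0 and N > 0 with σ(ξ) σ(η)^{−1} ≤ C (1 + |ξ − η|^N) for all ξ, η ∈ ℝⁿ. Then there exists a constant C' > 0, depending only on C, N and n, such that for every compactly supported smooth function a' on ℝⁿ and every Schwartz function f on ℝⁿ: ( ∫_{ℝⁿ} σ(ξ)² |F(a'f)(ξ)|² dξ )^{1/2} ≤ C' ( ∫_{ℝⁿ} (1 + |ξ|^N) |Fa'(ξ)| dξ ) · ( ∫_{ℝⁿ} σ(ξ)² |Ff(ξ)|² dξ )^{1/2}. -/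

import Mathlib

open MeasureTheory Finset

noncomputable section

/-- The Fourier transform `Fu(ξ) = (2π)^{-n/2} ∫ e^{-i x·ξ} u(x) dx`. -/
def myFourier {n : ℕ} (u : EuclideanSpace ℝ (Fin n) → ℂ) (ξ : EuclideanSpace ℝ (Fin n)) : ℂ :=
  ((2 * Real.pi) ^ (-(n : ℝ) / 2) : ℝ) *
    ∫ x : EuclideanSpace ℝ (Fin n), Complex.exp (-Complex.I * ((inner ℝ x ξ : ℝ) : ℂ)) * u x

open FourierTransform Real Complex SchwartzMap
open scoped RealInnerProductSpace

variable {n : ℕ}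

local notation "E" => EuclideanSpace ℝ (Fin n)

lemma myFourier_eq (u : E → ℂ) (ξ : E) :
    myFourier u ξ = (((2 * Real.pi) ^ (-(n : ℝ) / 2) : ℝ) : ℂ) * 𝓕 u ((2 * Real.pi)⁻¹ • ξ) := by
  rw [myFourier, Real.fourier_eq']
  congr 2
  ext x
  rw [smul_eq_mul]
  congr 2
  have : ⟪x, (2 * Real.pi)⁻¹ • ξ⟫ = (2 * Real.pi)⁻¹ * ⟪x, ξ⟫ := real_inner_smul_right x ξ _
  rw [this]
  have h2 : (2 * Real.pi) ≠ 0 := by positivity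
  push_cast
  have hc : (2 * (Real.pi : ℂ)) ≠ 0 := by
    have := Complex.ofReal_ne_zero.mpr h2
    push_cast at this
    exact this
  field_simp

/-- compactly supported smooth functions are Schwartz -/
def toSchwartz (a : E → ℂ) (h1 : ContDiff ℝ ((⊤ : ℕ∞)) a) (h2 : HasCompactSupport a) :
    SchwartzMap E ℂ where
  toFun := a
  smooth' := h1
  decay' := by
    intro k m
    have h3 : Continuous fun x : E => ‖x‖ ^ k * ‖iteratedFDeriv ℝ m a x‖ :=
      (continuous_norm.pow k).mul ((h1.continuous_iteratedFDeriv (by exact_mod_cast le_top)).norm)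
    have h4 : HasCompactSupport fun x : E => ‖x‖ ^ k * ‖iteratedFDeriv ℝ m a x‖ :=
      ((h2.iteratedFDeriv m).norm).mul_left
    obtain ⟨C, hC⟩ := h4.exists_bound_of_continuous h3
    exact ⟨C, fun x => by
      have := hC x
      rwa [Real.norm_eq_abs, _root_.abs_of_nonneg (by positivity)] at this⟩

local notation "A" => ((2 * Real.pi) ^ (-(n : ℝ) / 2) : ℝ)

lemma toSchwartz_apply (a : E → ℂ) (h1 h2) (x : E) : toSchwartz a h1 h2 x = a x := rfl

lemma twoPiPos : (0:ℝ) < 2 * Real.pi := by positivity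

lemma A_sq : (A : ℝ) * A * (2 * Real.pi) ^ (n : ℕ) = 1 := by
  rw [← Real.rpow_natCast (2 * Real.pi) n, ← Real.rpow_add twoPiPos,
    ← Real.rpow_add twoPiPos]
  rw [show -(n : ℝ) / 2 + -(n : ℝ) / 2 + (n : ℝ) = 0 by ring, Real.rpow_zero]

lemma myFourier_inv (f : SchwartzMap E ℂ) (x : E) :
    ((A : ℝ) : ℂ) *
      ∫ η : E, Complex.exp (Complex.I * ((inner ℝ x η : ℝ) : ℂ)) * myFourier (⇑f) η = f x := by
  have hFf_int : Integrable (𝓕 ⇑f) volume := by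
    rw [← SchwartzMap.fourier_coe, ← SchwartzMap.fourierTransformCLM_apply ℂ f]
    exact (SchwartzMap.fourierTransformCLM ℂ f).integrable
  set G : E → ℂ := fun v =>
    Complex.exp (((2 * Real.pi * ⟪v, x⟫ : ℝ) : ℂ) * Complex.I) * 𝓕 (⇑f) v with hG
  have h1 : ∀ η : E, Complex.exp (Complex.I * ((inner ℝ x η : ℝ) : ℂ)) * myFourier (⇑f) η
      = (((A : ℝ) : ℂ)) * G ((2 * Real.pi)⁻¹ • η) := by
    intro η
    rw [myFourier_eq]
    have h2 : (⟪(2 * Real.pi)⁻¹ • η, x⟫ : ℝ) = (2 * Real.pi)⁻¹ * ⟪x, η⟫ := by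
      rw [real_inner_smul_left, real_inner_comm]
    rw [hG]
    simp only [h2]
    have h3 : ((2 * Real.pi * ((2 * Real.pi)⁻¹ * ⟪x, η⟫) : ℝ) : ℂ) = ((⟪x, η⟫ : ℝ) : ℂ) := by
      rw [← mul_assoc, mul_inv_cancel₀ twoPiPos.ne', one_mul]
    rw [h3]
    ring
  simp only [h1]
  rw [integral_const_mul]
  have h4 : ∫ η : E, G ((2 * Real.pi)⁻¹ • η) =
      ((2 * Real.pi) ^ (n : ℕ) : ℝ) • ∫ v, G v := by
    rw [Measure.integral_comp_inv_smul_of_nonneg volume G twoPiPos.le,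
      finrank_euclideanSpace_fin]
  rw [h4]
  have h5 : ∫ v, G v = f x := by
    have : ∫ v, G v = 𝓕⁻ (𝓕 ⇑f) x := by
      rw [Real.fourierInv_eq']
      congr 1
    rw [this, Continuous.fourierInv_fourier_eq f.continuous f.integrable hFf_int]
  rw [h5, Complex.real_smul]
  have hA := A_sq (n := n)
  have hfin : ((A : ℝ) : ℂ) * (((A : ℝ) : ℂ) * (((((2 * Real.pi) ^ (n : ℕ) : ℝ)) : ℂ) * f x))
      = (((A * A * (2 * Real.pi) ^ (n : ℕ) : ℝ)) : ℂ) * f x := by push_cast; ring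
  rw [hfin, hA]
  simp
lemma norm_exp_I_mul_real (r : ℝ) : ‖Complex.exp (Complex.I * (r : ℂ))‖ = 1 := by
  rw [Complex.norm_exp]
  simp

lemma norm_exp_neg_I_mul_real (r : ℝ) : ‖Complex.exp (-Complex.I * (r : ℂ))‖ = 1 := by
  rw [Complex.norm_exp]
  simp

lemma myFourier_continuous (g : SchwartzMap E ℂ) : Continuous (myFourier ⇑g) := by
  have h : myFourier ⇑g = fun ξ => (((A : ℝ)) : ℂ) * 𝓕 ⇑g ((2 * Real.pi)⁻¹ • ξ) :=
    funext (myFourier_eq _)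
  rw [h, ← SchwartzMap.fourier_coe, ← SchwartzMap.fourierTransformCLM_apply ℂ g]
  exact continuous_const.mul
    (((SchwartzMap.fourierTransformCLM ℂ g).continuous).comp (continuous_const_smul _))

lemma myFourier_integrable (g : SchwartzMap E ℂ) : Integrable (myFourier ⇑g) volume := by
  have h : myFourier ⇑g = fun ξ => (((A : ℝ)) : ℂ) * 𝓕 ⇑g ((2 * Real.pi)⁻¹ • ξ) :=
    funext (myFourier_eq _)
  rw [h, ← SchwartzMap.fourier_coe, ← SchwartzMap.fourierTransformCLM_apply ℂ g]
  exact ((SchwartzMap.fourierTransformCLM ℂ g).integrable.comp_smul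
    (inv_ne_zero twoPiPos.ne')).const_mul _

lemma myFourier_conv (a : E → ℂ) (h1 : ContDiff ℝ ((⊤ : ℕ∞)) a) (h2 : HasCompactSupport a)
    (f : SchwartzMap E ℂ) (ξ : E) :
    myFourier (fun x => a x * f x) ξ
      = ((A : ℝ) : ℂ) * ∫ η : E, myFourier a (ξ - η) * myFourier (⇑f) η := by
  have hFc := myFourier_continuous f
  have hFi := myFourier_integrable f
  set φ : E → ℂ := fun x => Complex.exp (-Complex.I * ((⟪x, ξ⟫ : ℝ) : ℂ)) * a x with hφ
  set ψ : E → E → ℂ :=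
    fun η x => φ x * Complex.exp (Complex.I * ((⟪x, η⟫ : ℝ) : ℂ)) * myFourier (⇑f) η with hψ
  have hφc : Continuous φ := by
    apply Continuous.mul ?_ h1.continuous
    exact Complex.continuous_exp.comp
      (continuous_const.mul (Complex.continuous_ofReal.comp
        (Continuous.inner continuous_id continuous_const)))
  have hprod : Integrable (Function.uncurry ψ) (volume.prod volume) := by
    have hb : Integrable (fun z : EuclideanSpace ℝ (Fin n) × EuclideanSpace ℝ (Fin n) =>
        ‖myFourier (⇑f) z.1‖ * ‖a z.2‖) (volume.prod volume) :=
      hFi.norm.mul_prod (toSchwartz a h1 h2).integrable.norm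
    apply hb.mono'
    · apply Continuous.aestronglyMeasurable
      apply Continuous.mul
      · apply Continuous.mul
        · exact hφc.comp continuous_snd
        · exact Complex.continuous_exp.comp (continuous_const.mul
            (Complex.continuous_ofReal.comp (Continuous.inner continuous_snd continuous_fst)))
      · exact hFc.comp continuous_fst
    · filter_upwards with z
      rw [Function.uncurry]
      simp only [hψ, hφ, norm_mul, norm_exp_I_mul_real, norm_exp_neg_I_mul_real,
        one_mul, mul_one]
      rw [mul_comm]
  have step1 : ∀ η : EuclideanSpace ℝ (Fin n),
      myFourier a (ξ - η) * myFourier (⇑f) η = ((A : ℝ) : ℂ) * ∫ x, ψ η x := by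
    intro η
    simp only [myFourier]
    rw [mul_assoc, ← MeasureTheory.integral_mul_const]
    congr 1
    apply integral_congr_ae
    filter_upwards with x
    simp only [hψ, hφ, myFourier]
    have hinner : (⟪x, ξ - η⟫ : ℝ) = ⟪x, ξ⟫ - ⟪x, η⟫ := inner_sub_right x ξ η
    rw [hinner]
    rw [show -Complex.I * (((⟪x, ξ⟫ - ⟪x, η⟫ : ℝ)) : ℂ)
        = -Complex.I * ((⟪x, ξ⟫ : ℝ) : ℂ) + Complex.I * ((⟪x, η⟫ : ℝ) : ℂ) by push_cast; ring]
    rw [Complex.exp_add]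
    ring
  calc myFourier (fun x => a x * f x) ξ
      = ((A : ℝ) : ℂ) * ∫ x, φ x * (f x) := by
        simp only [myFourier, hφ]
        congr 1
        apply integral_congr_ae
        filter_upwards with x
        ring
    _ = ((A : ℝ) : ℂ) * ∫ x, φ x * (((A : ℝ) : ℂ) *
          ∫ η, Complex.exp (Complex.I * ((⟪x, η⟫ : ℝ) : ℂ)) * myFourier (⇑f) η) := by
        congr 1
        apply integral_congr_ae
        filter_upwards with x
        rw [myFourier_inv f x]
    _ = ((A : ℝ) : ℂ) * (((A : ℝ) : ℂ) * ∫ x, ∫ η, ψ η x) := by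
        rw [← MeasureTheory.integral_const_mul (((A : ℝ)) : ℂ) (fun x => ∫ η, ψ η x)]
        congr 1
        apply integral_congr_ae
        filter_upwards with x
        rw [mul_left_comm, ← MeasureTheory.integral_const_mul (φ x)]
        congr 1
        apply integral_congr_ae
        filter_upwards with η
        simp only [hψ]
        ring
    _ = ((A : ℝ) : ℂ) * (((A : ℝ) : ℂ) * ∫ η, ∫ x, ψ η x) := by
        rw [integral_integral_swap hprod]
    _ = ((A : ℝ) : ℂ) * ∫ η, myFourier a (ξ - η) * myFourier (⇑f) η := by
        congr 1
        rw [← MeasureTheory.integral_const_mul]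
        apply integral_congr_ae
        filter_upwards with η
        rw [step1 η]
lemma max_one_le (x : ℝ) (hx : 0 ≤ x) (m : ℕ) : max 1 x ^ m ≤ 1 + x ^ m := by
  rcases le_total x 1 with h | h
  · rw [max_eq_left h, one_pow]
    have : 0 ≤ x ^ m := pow_nonneg hx m
    linarith
  · rw [max_eq_right h]
    have : 0 ≤ (1:ℝ) := zero_le_one
    linarith [pow_nonneg hx m]

lemma poly_aux {N : ℝ} (hN : 0 < N) (x : ℝ) (hx : 0 ≤ x) :
    x ^ N ≤ 2 ^ ⌈N⌉₊ * (1 + x ^ ⌈N⌉₊) := by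
  set m := ⌈N⌉₊ with hm
  have h1 : x ^ N ≤ (1 + x) ^ N := Real.rpow_le_rpow hx (by linarith) hN.le
  have h2 : (1 + x) ^ N ≤ (1 + x) ^ (m : ℝ) :=
    Real.rpow_le_rpow_of_exponent_le (by linarith) (Nat.le_ceil N)
  have h3 : (1 + x) ^ (m : ℝ) = (1 + x) ^ m := Real.rpow_natCast _ m
  have h4 : (1 + x) ^ m ≤ (2 * max 1 x) ^ m := by
    apply pow_le_pow_left₀ (by linarith)
    rcases le_total x 1 with h | h
    · rw [max_eq_left h]; linarith
    · rw [max_eq_right h]; linarith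
  have h5 : (2 * max 1 x) ^ m = 2 ^ m * max 1 x ^ m := mul_pow 2 _ m
  have h6 : (2:ℝ) ^ m * max 1 x ^ m ≤ 2 ^ m * (1 + x ^ m) := by
    apply mul_le_mul_of_nonneg_left (max_one_le x hx m) (by positivity)
  linarith

lemma schwartz_poly_integrable {N : ℝ} (hN : 0 < N) (Ψ : SchwartzMap E ℂ) :
    Integrable (fun ξ : EuclideanSpace ℝ (Fin n) => (1 + ‖ξ‖ ^ N) * ‖Ψ ξ‖) volume := by
  set m := ⌈N⌉₊ with hm
  have hint : Integrable (fun ξ : EuclideanSpace ℝ (Fin n) =>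
      (1 + 2 ^ m) * ‖Ψ ξ‖ + 2 ^ m * (‖ξ‖ ^ m * ‖Ψ ξ‖)) volume :=
    (Ψ.integrable.norm.const_mul _).add ((Ψ.integrable_pow_mul volume m).const_mul _)
  apply hint.mono'
  · apply Continuous.aestronglyMeasurable
    exact (continuous_const.add
      (continuous_norm.rpow_const fun x => Or.inr hN.le)).mul Ψ.continuous.norm
  · filter_upwards with ξ
    have h0 : (0:ℝ) ≤ ‖Ψ ξ‖ := norm_nonneg _
    have h1 : (0:ℝ) ≤ ‖ξ‖ ^ N := Real.rpow_nonneg (norm_nonneg _) N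
    rw [Real.norm_eq_abs, _root_.abs_of_nonneg (by positivity)]
    have h2 := poly_aux hN ‖ξ‖ (norm_nonneg ξ)
    calc (1 + ‖ξ‖ ^ N) * ‖Ψ ξ‖ ≤ (1 + (2 ^ m * (1 + ‖ξ‖ ^ m))) * ‖Ψ ξ‖ := by nlinarith
      _ = (1 + 2 ^ m) * ‖Ψ ξ‖ + 2 ^ m * (‖ξ‖ ^ m * ‖Ψ ξ‖) := by ring

lemma schwartz_poly_bounded {N : ℝ} (hN : 0 < N) (Ψ : SchwartzMap E ℂ) :
    ∃ B : ℝ, 0 ≤ B ∧ ∀ ξ : EuclideanSpace ℝ (Fin n), (1 + ‖ξ‖ ^ N) * ‖Ψ ξ‖ ≤ B := by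
  set m := ⌈N⌉₊ with hm
  obtain ⟨c0, hc0, h0⟩ := Ψ.decay 0 0
  obtain ⟨c1, hc1, h1⟩ := Ψ.decay m 0
  refine ⟨(1 + 2 ^ m) * c0 + 2 ^ m * c1, by positivity, fun ξ => ?_⟩
  have e0 := h0 ξ
  have e1 := h1 ξ
  rw [norm_iteratedFDeriv_zero] at e0 e1
  rw [pow_zero, one_mul] at e0
  have h2 := poly_aux hN ‖ξ‖ (norm_nonneg ξ)
  have h3 : (0:ℝ) ≤ ‖Ψ ξ‖ := norm_nonneg _
  nlinarith [Real.rpow_nonneg (norm_nonneg ξ) N, pow_nonneg (norm_nonneg ξ) m]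

lemma young_conv (g h : EuclideanSpace ℝ (Fin n) → ENNReal)
    (hg : Measurable g) (hh : Measurable h) :
    ∫⁻ ξ, (∫⁻ η, g (ξ - η) * h η) ^ (2:ℕ) ≤
      (∫⁻ y, g y) ^ (2:ℕ) * ∫⁻ η, (h η) ^ (2:ℕ) := by
  set a := ∫⁻ y, g y with ha
  have hcollapse : ∀ x : ENNReal, (x ^ ((1:ℝ)/2)) ^ (2:ℝ) = x := by
    intro x
    rw [← ENNReal.rpow_mul]
    norm_num
  have key : ∀ ξ : EuclideanSpace ℝ (Fin n), (∫⁻ η, g (ξ - η) * h η)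
      ≤ a ^ ((1:ℝ)/2) * (∫⁻ η, g (ξ - η) * (h η) ^ (2:ℕ)) ^ ((1:ℝ)/2) := by
    intro ξ
    have hgm : Measurable fun η : EuclideanSpace ℝ (Fin n) => g (ξ - η) :=
      hg.comp (measurable_const.sub measurable_id)
    have heq : ∀ η : EuclideanSpace ℝ (Fin n), g (ξ - η) * h η =
        ((fun η => (g (ξ - η)) ^ ((1:ℝ)/2)) * fun η => (g (ξ - η)) ^ ((1:ℝ)/2) * h η) η := by
      intro η
      simp only [Pi.mul_apply]
      rw [← mul_assoc, ← ENNReal.rpow_add_of_nonneg _ _ (by norm_num) (by norm_num)]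
      norm_num
    have e1 : ∫⁻ η, ((g (ξ - η)) ^ ((1:ℝ)/2)) ^ (2:ℝ) = ∫⁻ η, g (ξ - η) :=
      lintegral_congr fun η => hcollapse _
    have e2 : ∫⁻ η, ((g (ξ - η)) ^ ((1:ℝ)/2) * h η) ^ (2:ℝ)
        = ∫⁻ η, g (ξ - η) * (h η) ^ (2:ℕ) := by
      apply lintegral_congr
      intro η
      rw [ENNReal.mul_rpow_of_nonneg _ _ (by norm_num), hcollapse]
      congr 1
      rw [← ENNReal.rpow_natCast (h η) 2]
      norm_num
    have e3 : ∫⁻ η, g (ξ - η) = a := by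
      rw [ha]
      exact (Measure.measurePreserving_sub_left volume ξ).lintegral_comp hg
    calc (∫⁻ η, g (ξ - η) * h η)
        = ∫⁻ η, ((fun η => (g (ξ - η)) ^ ((1:ℝ)/2)) * fun η => (g (ξ - η)) ^ ((1:ℝ)/2) * h η) η :=
          lintegral_congr heq
      _ ≤ (∫⁻ η, ((g (ξ - η)) ^ ((1:ℝ)/2)) ^ (2:ℝ)) ^ ((1:ℝ)/2) *
            (∫⁻ η, ((g (ξ - η)) ^ ((1:ℝ)/2) * h η) ^ (2:ℝ)) ^ ((1:ℝ)/2) :=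
          ENNReal.lintegral_mul_le_Lp_mul_Lq volume Real.HolderConjugate.two_two
            ((hgm.pow_const _).aemeasurable)
            (((hgm.pow_const _).mul hh).aemeasurable)
      _ = a ^ ((1:ℝ)/2) * (∫⁻ η, g (ξ - η) * (h η) ^ (2:ℕ)) ^ ((1:ℝ)/2) := by
          rw [e1, e2, e3]
  have hBmeas : Measurable fun ξ : EuclideanSpace ℝ (Fin n) =>
      ∫⁻ η, g (ξ - η) * (h η) ^ (2:ℕ) := by
    apply Measurable.lintegral_prod_right'
      (f := fun p : EuclideanSpace ℝ (Fin n) × EuclideanSpace ℝ (Fin n) => g (p.1 - p.2) * (h p.2) ^ (2:ℕ))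
    exact (hg.comp (measurable_fst.sub measurable_snd)).mul ((hh.comp measurable_snd).pow_const _)
  calc ∫⁻ ξ, (∫⁻ η, g (ξ - η) * h η) ^ (2:ℕ)
      ≤ ∫⁻ ξ, a * ∫⁻ η, g (ξ - η) * (h η) ^ (2:ℕ) := by
        apply lintegral_mono
        intro ξ
        refine le_trans (pow_le_pow_left' (key ξ) 2) (le_of_eq ?_)
        rw [mul_pow, ← ENNReal.rpow_natCast (a ^ ((1:ℝ)/2)) 2,
          ← ENNReal.rpow_natCast ((∫⁻ η, g (ξ - η) * (h η) ^ (2:ℕ)) ^ ((1:ℝ)/2)) 2]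
        push_cast
        rw [hcollapse, hcollapse]
    _ = a * ∫⁻ ξ, ∫⁻ η, g (ξ - η) * (h η) ^ (2:ℕ) := lintegral_const_mul a hBmeas
    _ = a * ∫⁻ η, ∫⁻ ξ, g (ξ - η) * (h η) ^ (2:ℕ) := by
        rw [lintegral_lintegral_swap]
        exact ((hg.comp (measurable_fst.sub measurable_snd)).mul
          ((hh.comp measurable_snd).pow_const _)).aemeasurable
    _ = a * ∫⁻ η, (∫⁻ ξ, g (ξ - η)) * (h η) ^ (2:ℕ) := by
        congr 1
        apply lintegral_congr
        intro η
        have hgm2 : Measurable fun ξ : EuclideanSpace ℝ (Fin n) => g (ξ - η) :=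
          hg.comp (measurable_id.sub measurable_const)
        exact lintegral_mul_const _ hgm2
    _ = a * ∫⁻ η, a * (h η) ^ (2:ℕ) := by
        congr 1
        apply lintegral_congr
        intro η
        rw [lintegral_sub_right_eq_self g η, ha]
    _ = a ^ (2:ℕ) * ∫⁻ η, (h η) ^ (2:ℕ) := by
        rw [lintegral_const_mul a (hh.pow_const _), pow_two, mul_assoc]
lemma scale_temperate : Function.HasTemperateGrowth
    (fun ξ : EuclideanSpace ℝ (Fin n) => (2 * Real.pi)⁻¹ • ξ) :=
  ((2 * Real.pi)⁻¹ • (ContinuousLinearMap.id ℝ (EuclideanSpace ℝ (Fin n)))).hasTemperateGrowth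

lemma scale_antilip : AntilipschitzWith ((2 * Real.pi).toNNReal)
    (fun ξ : EuclideanSpace ℝ (Fin n) => (2 * Real.pi)⁻¹ • ξ) := by
  have := ContinuousLinearMap.antilipschitz_of_bound
    ((2 * Real.pi)⁻¹ • (ContinuousLinearMap.id ℝ (EuclideanSpace ℝ (Fin n))))
    (K := (2 * Real.pi).toNNReal) ?_
  · exact this
  · intro x
    simp only [ContinuousLinearMap.coe_smul', Pi.smul_apply, ContinuousLinearMap.coe_id', id_eq,
      norm_smul, norm_inv, Real.norm_eq_abs, abs_of_pos twoPiPos]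
    rw [Real.coe_toNNReal _ twoPiPos.le, ← mul_assoc, mul_inv_cancel₀ twoPiPos.ne', one_mul]

def myFourierSchwartz (g : SchwartzMap E ℂ) : SchwartzMap E ℂ :=
  (A : ℝ) • (SchwartzMap.compCLMOfAntilipschitz ℝ scale_temperate scale_antilip
    (SchwartzMap.fourierTransformCLM ℂ g))

lemma myFourierSchwartz_apply (g : SchwartzMap E ℂ) :
    ⇑(myFourierSchwartz g) = myFourier ⇑g := by
  funext ξ
  rw [myFourier_eq]
  show (A : ℝ) • ((SchwartzMap.fourierTransformCLM ℂ g) ((2 * Real.pi)⁻¹ • ξ)) = _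
  rw [SchwartzMap.fourierTransformCLM_apply, SchwartzMap.fourier_coe, Complex.real_smul]
/-- multiplication by a test function `a'` is bounded on the weighted
space `H^σ`, with norm controlled by `∫ (1+|ξ|^N)|Fa'(ξ)| dξ` and a constant
depending only on `C`, `N` and `n`. -/
theorem statement17 (n : ℕ) (C N : ℝ) (hC : 0 < C) (hN : 0 < N) :
    ∃ C' > (0 : ℝ), ∀ σ : EuclideanSpace ℝ (Fin n) → ℝ,
      Measurable σ → (∀ ξ, 0 < σ ξ) →
      (∀ ξ η : EuclideanSpace ℝ (Fin n), σ ξ / σ η ≤ C * (1 + ‖ξ - η‖ ^ N)) →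
      ∀ a' : EuclideanSpace ℝ (Fin n) → ℂ, ContDiff ℝ (⊤ : ℕ∞) a' → HasCompactSupport a' →
      ∀ f : SchwartzMap (EuclideanSpace ℝ (Fin n)) ℂ,
        (∫ ξ : EuclideanSpace ℝ (Fin n), σ ξ ^ 2 * ‖myFourier (fun x => a' x * f x) ξ‖ ^ 2)
            ^ ((1 : ℝ) / 2)
          ≤ C' * (∫ ξ : EuclideanSpace ℝ (Fin n), (1 + ‖ξ‖ ^ N) * ‖myFourier a' ξ‖)
            * (∫ ξ : EuclideanSpace ℝ (Fin n), σ ξ ^ 2 * ‖myFourier (⇑f) ξ‖ ^ 2)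
                ^ ((1 : ℝ) / 2) := by
  have hA0 : (0:ℝ) < (2 * Real.pi) ^ (-(n : ℝ) / 2) := Real.rpow_pos_of_pos twoPiPos _
  refine ⟨(2 * Real.pi) ^ (-(n : ℝ) / 2) * C, by positivity, ?_⟩
  intro σ hσm hσpos hσ a' ha1' ha2 f
  have ha1 : ContDiff ℝ ((⊤ : ℕ∞)) a' := ha1'.of_le (by simp)
  have hprod_smooth : ContDiff ℝ ((⊤ : ℕ∞)) (fun x => a' x * f x) := ha1.mul (f.smooth ⊤)
  have hprod_supp : HasCompactSupport fun x => a' x * f x := ha2.mul_right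
  set ga := toSchwartz a' ha1 ha2 with hga
  set gp := toSchwartz _ hprod_smooth hprod_supp with hgp
  have hcoea : ⇑ga = a' := rfl
  have hcoep : ⇑gp = fun x => a' x * f x := rfl
  have hFa_cont : Continuous (myFourier a') := hcoea ▸ myFourier_continuous ga
  have hFf_cont : Continuous (myFourier ⇑f) := myFourier_continuous f
  have hFp_cont : Continuous (myFourier fun x => a' x * f x) := hcoep ▸ myFourier_continuous gp
  have hΨa : ⇑(myFourierSchwartz ga) = myFourier a' := hcoea ▸ myFourierSchwartz_apply ga
  have hΨf : ⇑(myFourierSchwartz f) = myFourier ⇑f := myFourierSchwartz_apply f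
  set g : EuclideanSpace ℝ (Fin n) → ENNReal :=
    fun η => ENNReal.ofReal ((1 + ‖η‖ ^ N) * ‖myFourier a' η‖) with hgdef
  set h : EuclideanSpace ℝ (Fin n) → ENNReal :=
    fun η => ENNReal.ofReal (σ η * ‖myFourier (⇑f) η‖) with hhdef
  have hpolyc : Continuous fun ξ : EuclideanSpace ℝ (Fin n) => 1 + ‖ξ‖ ^ N :=
    continuous_const.add (continuous_norm.rpow_const fun x => Or.inr hN.le)
  have hg_meas : Measurable g := ((hpolyc.mul hFa_cont.norm).measurable).ennreal_ofReal
  have hh_meas : Measurable h := (hσm.mul hFf_cont.norm.measurable).ennreal_ofReal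
  -- pointwise bound
  have hpt : ∀ ξ, ENNReal.ofReal (σ ξ * ‖myFourier (fun x => a' x * f x) ξ‖)
      ≤ ENNReal.ofReal (((2 * Real.pi) ^ (-(n : ℝ) / 2)) * C) * ∫⁻ η, g (ξ - η) * h η := by
    intro ξ
    rw [myFourier_conv a' ha1 ha2 f ξ]
    have hnn : σ ξ * ‖((((2 * Real.pi) ^ (-(n : ℝ) / 2) : ℝ)) : ℂ) *
        ∫ η, myFourier a' (ξ - η) * myFourier (⇑f) η‖
        = ((2 * Real.pi) ^ (-(n : ℝ) / 2)) *
          (σ ξ * ‖∫ η, myFourier a' (ξ - η) * myFourier (⇑f) η‖) := by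
      rw [norm_mul, Complex.norm_real, Real.norm_eq_abs, _root_.abs_of_nonneg hA0.le]
      ring
    rw [hnn, ENNReal.ofReal_mul hA0.le, ENNReal.ofReal_mul hA0.le, mul_assoc]
    apply mul_le_mul_right
    have h1 : ENNReal.ofReal (σ ξ * ‖∫ η, myFourier a' (ξ - η) * myFourier (⇑f) η‖)
        ≤ ENNReal.ofReal (σ ξ) * ∫⁻ η, ↑‖myFourier a' (ξ - η) * myFourier (⇑f) η‖₊ := by
      rw [ENNReal.ofReal_mul (hσpos ξ).le, ofReal_norm]
      exact mul_le_mul_right (enorm_integral_le_lintegral_enorm _) _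
    refine h1.trans ?_
    rw [← lintegral_const_mul' _ _ ENNReal.ofReal_ne_top,
      ← lintegral_const_mul' _ _ ENNReal.ofReal_ne_top]
    apply lintegral_mono
    intro η
    have hσle : σ ξ ≤ C * (1 + ‖ξ - η‖ ^ N) * σ η := by
      have := hσ ξ η
      rw [div_le_iff₀ (hσpos η)] at this
      linarith
    have hreal : σ ξ * ‖myFourier a' (ξ - η) * myFourier (⇑f) η‖
        ≤ C * (((1 + ‖ξ - η‖ ^ N)) * ‖myFourier a' (ξ - η)‖) * (σ η * ‖myFourier (⇑f) η‖) := by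
      rw [norm_mul]
      have hb : (0:ℝ) ≤ ‖myFourier a' (ξ - η)‖ * ‖myFourier (⇑f) η‖ := by positivity
      calc σ ξ * (‖myFourier a' (ξ - η)‖ * ‖myFourier (⇑f) η‖)
          ≤ (C * (1 + ‖ξ - η‖ ^ N) * σ η) * (‖myFourier a' (ξ - η)‖ * ‖myFourier (⇑f) η‖) :=
            mul_le_mul_of_nonneg_right hσle hb
        _ = C * (((1 + ‖ξ - η‖ ^ N)) * ‖myFourier a' (ξ - η)‖) * (σ η * ‖myFourier (⇑f) η‖) := by
            ring
    calc ENNReal.ofReal (σ ξ) * ↑‖myFourier a' (ξ - η) * myFourier (⇑f) η‖₊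
        = ENNReal.ofReal (σ ξ * ‖myFourier a' (ξ - η) * myFourier (⇑f) η‖) := by
          rw [ENNReal.ofReal_mul (hσpos ξ).le, ofReal_norm]
          rfl
      _ ≤ ENNReal.ofReal (C * (((1 + ‖ξ - η‖ ^ N)) * ‖myFourier a' (ξ - η)‖) *
            (σ η * ‖myFourier (⇑f) η‖)) := ENNReal.ofReal_le_ofReal hreal
      _ = ENNReal.ofReal C * (g (ξ - η) * h η) := by
          rw [ENNReal.ofReal_mul (by positivity), ENNReal.ofReal_mul hC.le, mul_assoc]
  -- main lintegral quantities
  set AC : ℝ := ((2 * Real.pi) ^ (-(n : ℝ) / 2)) * C with hACdef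
  have hAC0 : 0 < AC := by positivity
  set L := ∫⁻ ξ, (ENNReal.ofReal (σ ξ * ‖myFourier (fun x => a' x * f x) ξ‖)) ^ (2:ℕ) with hLdef
  set IG := ∫⁻ y, g y with hIGdef
  set R := ∫⁻ η, (h η) ^ (2:ℕ) with hRdef
  have hconv_meas : Measurable fun ξ : EuclideanSpace ℝ (Fin n) => ∫⁻ η, g (ξ - η) * h η := by
    apply Measurable.lintegral_prod_right'
      (f := fun p : EuclideanSpace ℝ (Fin n) × EuclideanSpace ℝ (Fin n) => g (p.1 - p.2) * h p.2)
    exact (hg_meas.comp (measurable_fst.sub measurable_snd)).mul (hh_meas.comp measurable_snd)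
  have hL : L ≤ ENNReal.ofReal AC ^ (2:ℕ) * (IG ^ (2:ℕ) * R) := by
    calc L ≤ ∫⁻ ξ, (ENNReal.ofReal AC * ∫⁻ η, g (ξ - η) * h η) ^ (2:ℕ) :=
          lintegral_mono fun ξ => pow_le_pow_left' (hpt ξ) 2
      _ = ENNReal.ofReal AC ^ (2:ℕ) * ∫⁻ ξ, (∫⁻ η, g (ξ - η) * h η) ^ (2:ℕ) := by
          simp_rw [mul_pow]
          exact lintegral_const_mul _ (hconv_meas.pow_const _)
      _ ≤ ENNReal.ofReal AC ^ (2:ℕ) * (IG ^ (2:ℕ) * R) :=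
          mul_le_mul_right (young_conv g h hg_meas hh_meas) _
  -- finiteness
  have hIG_fin : IG ≠ ⊤ := by
    have hint : Integrable (fun ξ : EuclideanSpace ℝ (Fin n) =>
        (1 + ‖ξ‖ ^ N) * ‖myFourier a' ξ‖) volume := by
      have := schwartz_poly_integrable hN (myFourierSchwartz ga)
      rwa [hΨa] at this
    exact hint.lintegral_lt_top.ne
  have hR_fin : R ≠ ⊤ := by
    obtain ⟨B, hB0, hB⟩ := schwartz_poly_bounded hN (myFourierSchwartz f)
    rw [hΨf] at hB
    set D : ℝ := C * σ 0 with hDdef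
    have hD0 : 0 < D := mul_pos hC (hσpos 0)
    have hσle : ∀ η : EuclideanSpace ℝ (Fin n), σ η ≤ D * (1 + ‖η‖ ^ N) := by
      intro η
      have := hσ η 0
      rw [div_le_iff₀ (hσpos 0), sub_zero] at this
      calc σ η ≤ C * (1 + ‖η‖ ^ N) * σ 0 := this
        _ = D * (1 + ‖η‖ ^ N) := by rw [hDdef]; ring
    have hb : ∀ η, (h η) ^ (2:ℕ) ≤ ENNReal.ofReal (D ^ 2 * B) *
        ENNReal.ofReal ((1 + ‖η‖ ^ N) * ‖myFourier (⇑f) η‖) := by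
      intro η
      rw [hhdef]
      rw [← ENNReal.ofReal_pow (mul_nonneg (hσpos η).le (norm_nonneg _)),
        ← ENNReal.ofReal_mul (mul_nonneg (sq_nonneg D) hB0)]
      apply ENNReal.ofReal_le_ofReal
      have h1 : (0:ℝ) ≤ ‖myFourier (⇑f) η‖ := norm_nonneg _
      have h2 : (0:ℝ) ≤ 1 + ‖η‖ ^ N := by positivity
      have h3 := hB η
      have h4 := hσle η
      have h5 : σ η * ‖myFourier (⇑f) η‖ ≤ D * ((1 + ‖η‖ ^ N) * ‖myFourier (⇑f) η‖) := by
        calc σ η * ‖myFourier (⇑f) η‖ ≤ (D * (1 + ‖η‖ ^ N)) * ‖myFourier (⇑f) η‖ :=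
              mul_le_mul_of_nonneg_right h4 h1
          _ = D * ((1 + ‖η‖ ^ N) * ‖myFourier (⇑f) η‖) := by ring
      calc (σ η * ‖myFourier (⇑f) η‖) ^ 2
          ≤ (D * ((1 + ‖η‖ ^ N) * ‖myFourier (⇑f) η‖)) ^ 2 :=
            pow_le_pow_left₀ (mul_nonneg (hσpos η).le h1) h5 2
        _ = D ^ 2 * (((1 + ‖η‖ ^ N) * ‖myFourier (⇑f) η‖) *
              ((1 + ‖η‖ ^ N) * ‖myFourier (⇑f) η‖)) := by ring
        _ ≤ D ^ 2 * (B * ((1 + ‖η‖ ^ N) * ‖myFourier (⇑f) η‖)) :=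
            mul_le_mul_of_nonneg_left
              (mul_le_mul_of_nonneg_right h3 (mul_nonneg h2 h1)) (sq_nonneg D)
        _ = D ^ 2 * B * ((1 + ‖η‖ ^ N) * ‖myFourier (⇑f) η‖) := by ring
    have hfin2 : Integrable (fun ξ : EuclideanSpace ℝ (Fin n) =>
        (1 + ‖ξ‖ ^ N) * ‖myFourier (⇑f) ξ‖) volume := by
      have := schwartz_poly_integrable hN (myFourierSchwartz f)
      rwa [hΨf] at this
    have : R ≤ ENNReal.ofReal (D ^ 2 * B) *
        ∫⁻ η, ENNReal.ofReal ((1 + ‖η‖ ^ N) * ‖myFourier (⇑f) η‖) := by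
      rw [hRdef, ← lintegral_const_mul' _ _ ENNReal.ofReal_ne_top]
      exact lintegral_mono hb
    exact (this.trans_lt (ENNReal.mul_lt_top ENNReal.ofReal_lt_top
      hfin2.lintegral_lt_top)).ne
  -- conversions
  have hconv1 : (∫ ξ, σ ξ ^ 2 * ‖myFourier (fun x => a' x * f x) ξ‖ ^ 2) = L.toReal := by
    rw [integral_eq_lintegral_of_nonneg_ae]
    · congr 1
      apply lintegral_congr
      intro ξ
      rw [← ENNReal.ofReal_pow (mul_nonneg (hσpos ξ).le (norm_nonneg _)), mul_pow]
    · filter_upwards with ξ using by positivity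
    · exact ((hσm.pow_const 2).mul (hFp_cont.norm.pow 2).measurable).aestronglyMeasurable
  have hconv2 : (∫ ξ, (1 + ‖ξ‖ ^ N) * ‖myFourier a' ξ‖) = IG.toReal := by
    rw [integral_eq_lintegral_of_nonneg_ae]
    · filter_upwards with ξ using by positivity
    · exact (hpolyc.mul hFa_cont.norm).aestronglyMeasurable
  have hconv3 : (∫ ξ, σ ξ ^ 2 * ‖myFourier (⇑f) ξ‖ ^ 2) = R.toReal := by
    rw [integral_eq_lintegral_of_nonneg_ae]
    · congr 1
      apply lintegral_congr
      intro ξ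
      rw [← ENNReal.ofReal_pow (mul_nonneg (hσpos ξ).le (norm_nonneg _)), mul_pow]
    · filter_upwards with ξ using by positivity
    · exact ((hσm.pow_const 2).mul (hFf_cont.norm.pow 2).measurable).aestronglyMeasurable
  rw [hconv1, hconv2, hconv3, ENNReal.toReal_rpow, ENNReal.toReal_rpow]
  have hstep : L ^ ((1:ℝ)/2) ≤ ENNReal.ofReal AC * IG * R ^ ((1:ℝ)/2) := by
    have h1 := ENNReal.rpow_le_rpow hL (by norm_num : (0:ℝ) ≤ 1/2)
    refine h1.trans (le_of_eq ?_)
    rw [ENNReal.mul_rpow_of_nonneg _ _ (by norm_num), ENNReal.mul_rpow_of_nonneg _ _ (by norm_num)]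
    rw [← ENNReal.rpow_natCast (ENNReal.ofReal AC) 2, ← ENNReal.rpow_natCast IG 2,
      ← ENNReal.rpow_mul, ← ENNReal.rpow_mul]
    norm_num
    rw [mul_assoc]
  have hRHS_ne : ENNReal.ofReal AC * IG * R ^ ((1:ℝ)/2) ≠ ⊤ :=
    ENNReal.mul_ne_top (ENNReal.mul_ne_top ENNReal.ofReal_ne_top hIG_fin)
      (ENNReal.rpow_ne_top_of_nonneg (by norm_num) hR_fin)
  have hfinal := ENNReal.toReal_mono hRHS_ne hstep
  rw [ENNReal.toReal_mul, ENNReal.toReal_mul, ENNReal.toReal_ofReal hAC0.le] at hfinal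
  exact hfinal

end
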